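/- Let m ∈ [n] and let B = (b₁ < ⋯ < b_d) be a top set of length d in [n]. Then, as an identity of polynomials, ∑_{1 ≤ i < m} χ_B^{(i m)} = λ_m(B) · χ_B, where χ_B^{(i m)} denotes χ_B with the variables x_i and x_m swapped, and λ_m(B) = i − 2 if b_i = m, and λ_m(B) = m − i if b_{i−1} < m < b_i (with the conventions b₀ = −∞ and b_{d+1} = +∞). -/

import Mathlib

/-!
Expand `χ_B` as the sum of `χ_{A,B}` over the admissible `A`; renaming by the transposition
`(i p)` then simply relabels the entries of `A` and `B`. Fix `A`. The indices `i < p` of the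
form `a_m` or `b_m` with `b_m < p` come in pairs whose two relabelled products add up to
`χ_{A,B}`, which contributes `#{m | b_m < p} • χ_B`. For the remaining pairs `(i, A)`:
if `p ∉ B`, the transposition fixes `B` and permutes the admissible `A`, so each remaining
index contributes `χ_B` once, and there are `p - 2 #{m | b_m < p}` of them; if `p = b_k`, then
`(i, A) ↦ (a_k, (i a_k) ∘ A)` is a sign-reversing involution whose fixed points `i = a_k`
contribute `-χ_B`.
-/

open MvPolynomial

/-- `B : Fin d → Fin n` is a top set if it is strictly increasing and there is a
sequence `A` of `d` distinct elements, disjoint from `B`, with `A i < B i` for all `i`. -/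
def IsTopSet {n d : ℕ} (B : Fin d → Fin n) : Prop :=
  StrictMono B ∧ ∃ A : Fin d → Fin n,
    Function.Injective A ∧ (∀ i j, A i ≠ B j) ∧ ∀ i, A i < B i

/-- `χ_{A,B} = ∏ i (x_{a_i} - x_{b_i})`. -/
noncomputable def chiAB {n d : ℕ} (A B : Fin d → Fin n) : MvPolynomial (Fin n) ℝ :=
  ∏ i, (X (A i) - X (B i))

open Classical in
/-- `χ_B = ∑_{A < B, A disjoint from B} χ_{A,B}`. -/
noncomputable def chiB {n d : ℕ} (B : Fin d → Fin n) : MvPolynomial (Fin n) ℝ :=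
  ∑ A ∈ Finset.univ.filter (fun A : Fin d → Fin n =>
      Function.Injective A ∧ (∀ i j, A i ≠ B j) ∧ ∀ i, A i < B i),
    chiAB A B

open Finset Equiv
open Function (Injective)

section ProdLemmas

variable {ι R : Type*} [Fintype ι] [DecidableEq ι] [CommRing R]

theorem Fintype.prod_eq_neg_prod_of_forall_ne (k : ι) {f g : ι → R}
    (h : ∀ j ≠ k, f j = g j) (hk : f k = -g k) : ∏ j, f j = -∏ j, g j := by
  rw [Fintype.prod_eq_mul_prod_compl k f, Fintype.prod_eq_mul_prod_compl k g, hk,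
    Finset.prod_congr rfl fun j hj => h j (by simpa using hj), neg_mul]

theorem Fintype.prod_add_prod_eq_of_forall_notMem (s : Finset ι) {f₁ f₂ g : ι → R}
    (h₁ : ∀ j ∉ s, f₁ j = g j) (h₂ : ∀ j ∉ s, f₂ j = g j)
    (hs : ∏ j ∈ s, f₁ j + ∏ j ∈ s, f₂ j = ∏ j ∈ s, g j) :
    ∏ j, f₁ j + ∏ j, f₂ j = ∏ j, g j := by
  rw [← Finset.prod_mul_prod_compl s f₁, ← Finset.prod_mul_prod_compl s f₂,
    ← Finset.prod_mul_prod_compl s g,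
    Finset.prod_congr rfl fun j hj => h₁ j (mem_compl.1 hj),
    Finset.prod_congr rfl fun j hj => h₂ j (mem_compl.1 hj)]
  linear_combination (∏ j ∈ sᶜ, g j) * hs

end ProdLemmas

section ChiAB

variable {n d : ℕ} {A B : Fin d → Fin n} {p : Fin n}

theorem rename_chiAB (σ : Perm (Fin n)) (A B : Fin d → Fin n) :
    rename σ (chiAB A B) = chiAB (σ ∘ A) (σ ∘ B) := by
  simp [chiAB, map_prod]

theorem chiAB_eq_neg_of_swap_at {A' B' : Fin d → Fin n} (k : Fin d) (hA : A' k = B k)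
    (hB : B' k = A k) (h : ∀ j ≠ k, A' j = A j ∧ B' j = B j) :
    chiAB A' B' = -chiAB A B :=
  Fintype.prod_eq_neg_prod_of_forall_ne k (fun j hj => by rw [(h j hj).1, (h j hj).2])
    (by rw [hA, hB]; ring)

structure Admissible (A B : Fin d → Fin n) : Prop where
  injective : Injective A
  ne : ∀ i j, A i ≠ B j
  lt : ∀ i, A i < B i

theorem Admissible.ne' (hA : Admissible A B) (i j : Fin d) : B i ≠ A j :=
  fun h => hA.ne j i h.symm

theorem Admissible.perm_comp {σ : Perm (Fin n)} (hA : Admissible A B)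
    (hσB : ∀ j, σ (B j) = B j) (hlt : ∀ j, σ (A j) < B j) : Admissible (σ ∘ A) B :=
  ⟨σ.injective.comp hA.injective,
    fun i j h => hA.ne i j (σ.injective (h.trans (hσB j).symm)), hlt⟩

theorem Admissible.disjoint_image_image (hA : Admissible A B) (s : Finset (Fin d)) :
    Disjoint (s.image A) (s.image B) := by
  simp only [disjoint_left, mem_image]
  rintro _ ⟨i, -, rfl⟩ ⟨j, -, h⟩
  exact hA.ne i j h.symm

open Classical in
noncomputable def admissibleFinset (B : Fin d → Fin n) : Finset (Fin d → Fin n) :=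
  univ.filter (Admissible · B)

theorem mem_admissibleFinset : A ∈ admissibleFinset B ↔ Admissible A B := by
  simp [admissibleFinset]

theorem chiB_eq_sum_admissible (B : Fin d → Fin n) :
    chiB B = ∑ A ∈ admissibleFinset B, chiAB A B := by
  refine sum_congr (ext fun A => ?_) fun _ _ => rfl
  rw [mem_admissibleFinset, mem_filter]
  exact ⟨fun ⟨_, h₁, h₂, h₃⟩ => ⟨h₁, h₂, h₃⟩, fun ⟨h₁, h₂, h₃⟩ => ⟨mem_univ _, h₁, h₂, h₃⟩⟩

theorem rename_swap_add_rename_swap_chiAB (hA : Admissible A B) (hB : Injective B) {m : Fin d}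
    (hm : B m < p) :
    rename (swap (A m) p) (chiAB A B) + rename (swap (B m) p) (chiAB A B) = chiAB A B := by
  have hap : A m ≠ p := ((hA.lt m).trans hm).ne
  have hbp : B m ≠ p := hm.ne
  rw [rename_chiAB, rename_chiAB]
  -- Only the factor at `m` and the factor containing `x_p`, if there is one, are moved.
  by_cases hp : ∃ k, A k = p ∨ B k = p
  · obtain ⟨k, hk⟩ := hp
    have hkm : k ≠ m := by rintro rfl; exact hk.elim hap hbp
    rcases hk with rfl | rfl <;>
    · apply Fintype.prod_add_prod_eq_of_forall_notMem {m, k} <;>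
        simp +contextual [swap_apply_def, prod_pair hkm.symm, hA.injective.eq_iff, hB.eq_iff,
          hA.ne, hA.ne', hkm, hkm.symm]
      ring
  · push Not at hp
    apply Fintype.prod_add_prod_eq_of_forall_notMem {m} <;>
      simp +contextual [swap_apply_def, hA.injective.eq_iff, hB.eq_iff, hA.ne, hA.ne', hp]

end ChiAB

section Paired

variable {n d : ℕ} {A B : Fin d → Fin n} {p i : Fin n}

def pairedFinset (A B : Fin d → Fin n) (p : Fin n) : Finset (Fin n) :=
  (univ.filter (B · < p)).image A ∪ (univ.filter (B · < p)).image B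

theorem notMem_pairedFinset : i ∉ pairedFinset A B p ↔ ∀ m, B m < p → A m ≠ i ∧ B m ≠ i := by
  simp [pairedFinset, forall_and]

theorem pairedFinset_subset (hA : Admissible A B) (p : Fin n) :
    pairedFinset A B p ⊆ univ.filter (· < p) := by
  intro i hi
  simp only [pairedFinset, mem_union, mem_image, mem_filter, mem_univ, true_and] at hi ⊢
  rcases hi with ⟨m, hm, rfl⟩ | ⟨m, hm, rfl⟩
  exacts [(hA.lt m).trans hm, hm]

theorem card_pairedFinset (hA : Admissible A B) (hB : Injective B) (p : Fin n) :
    #(pairedFinset A B p) = 2 * #(univ.filter (B · < p)) := by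
  rw [pairedFinset, card_union_of_disjoint (hA.disjoint_image_image _),
    card_image_of_injective _ hA.injective, card_image_of_injective _ hB, two_mul]

theorem card_sdiff_pairedFinset (hA : Admissible A B) (hB : Injective B) (p : Fin n) :
    (#(univ.filter (· < p) \ pairedFinset A B p) : ℝ)
      = (p : ℕ) - 2 * #(univ.filter (B · < p)) := by
  rw [card_sdiff_of_subset (pairedFinset_subset hA p),
    Nat.cast_sub (card_le_card (pairedFinset_subset hA p)), card_pairedFinset hA hB,
    filter_gt_eq_Iio, Fin.card_Iio]
  push_cast
  ring

theorem sum_pairedFinset_rename_swap_chiAB (hA : Admissible A B) (hB : Injective B)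
    (p : Fin n) :
    ∑ i ∈ pairedFinset A B p, rename (swap i p) (chiAB A B)
      = #(univ.filter (B · < p)) • chiAB A B := by
  rw [pairedFinset, sum_union (hA.disjoint_image_image _), sum_image hA.injective.injOn,
    sum_image hB.injOn, ← sum_add_distrib,
    sum_congr rfl fun m hm => rename_swap_add_rename_swap_chiAB hA hB (mem_filter.1 hm).2,
    sum_const]

theorem sum_filter_lt_rename_swap_chiAB (hA : Admissible A B) (hB : Injective B) (p : Fin n) :
    ∑ i ∈ univ.filter (· < p), rename (swap i p) (chiAB A B)
      = #(univ.filter (B · < p)) • chiAB A B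
        + ∑ i ∈ univ.filter (· < p) \ pairedFinset A B p, rename (swap i p) (chiAB A B) := by
  rw [← sum_sdiff (pairedFinset_subset hA p), sum_pairedFinset_rename_swap_chiAB hA hB,
    add_comm]

end Paired

section Unpaired

variable {n d : ℕ} {A B : Fin d → Fin n} {p i : Fin n}

noncomputable def unpairedFinset (B : Fin d → Fin n) (p : Fin n) :
    Finset (Fin n × (Fin d → Fin n)) :=
  (univ.filter (· < p) ×ˢ admissibleFinset B).filter fun x => x.1 ∉ pairedFinset x.2 B p

theorem mem_unpairedFinset :
    (i, A) ∈ unpairedFinset B p ↔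
      i < p ∧ Admissible A B ∧ ∀ m, B m < p → A m ≠ i ∧ B m ≠ i := by
  simp only [unpairedFinset, mem_filter, mem_product, mem_univ, true_and, mem_admissibleFinset,
    notMem_pairedFinset, and_assoc]

theorem sum_unpairedFinset {M : Type*} [AddCommMonoid M] (B : Fin d → Fin n) (p : Fin n)
    (f : Fin n × (Fin d → Fin n) → M) :
    ∑ x ∈ unpairedFinset B p, f x
      = ∑ A ∈ admissibleFinset B, ∑ i ∈ univ.filter (· < p) \ pairedFinset A B p, f (i, A) :=
  sum_finset_product_right _ _ _ fun x => by
    simp only [unpairedFinset, mem_filter, mem_product, mem_sdiff, mem_univ, true_and]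
    tauto

theorem swap_comp_mem_unpairedFinset (hp : p ∉ Set.range B)
    (hx : (i, A) ∈ unpairedFinset B p) : (i, swap i p ∘ A) ∈ unpairedFinset B p := by
  obtain ⟨hi, hA, hu⟩ := mem_unpairedFinset.1 hx
  have hBi : ∀ j, B j ≠ i := fun j h => (hu j (h ▸ hi)).2 h
  have hBp : ∀ j, B j ≠ p := fun j h => hp ⟨j, h⟩
  refine mem_unpairedFinset.2 ⟨hi, hA.perm_comp
    (fun j => swap_apply_of_ne_of_ne (hBi j) (hBp j)) fun t => ?_,
    fun m hm => ⟨fun h => ?_, (hu m hm).2⟩⟩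
  · rw [swap_apply_def]
    split_ifs with h₁ h₂
    · exact lt_of_le_of_ne (not_lt.1 fun h => (hu t h).1 h₁) (hBp t).symm
    · exact hi.trans (h₂ ▸ hA.lt t)
    · exact hA.lt t
  · rw [Function.comp_apply, swap_apply_eq_iff, swap_apply_left] at h
    exact (hA.lt m).not_gt (h ▸ hm)

theorem sum_unpairedFinset_rename_swap_chiAB_of_notMem_range (hp : p ∉ Set.range B) :
    ∑ x ∈ unpairedFinset B p, rename (swap x.1 p) (chiAB x.2 B)
      = ∑ x ∈ unpairedFinset B p, chiAB x.2 B := by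
  refine sum_nbij' (fun x => (x.1, swap x.1 p ∘ x.2)) (fun x => (x.1, swap x.1 p ∘ x.2))
    (fun _ hx => swap_comp_mem_unpairedFinset hp hx)
    (fun _ hx => swap_comp_mem_unpairedFinset hp hx)
    (fun _ _ => by ext <;> simp) (fun _ _ => by ext <;> simp) fun ⟨i, A⟩ hx => ?_
  obtain ⟨hi, -, hu⟩ := mem_unpairedFinset.1 hx
  rw [rename_chiAB]
  congr 1
  funext j
  exact swap_apply_of_ne_of_ne (fun h => (hu j (h ▸ hi)).2 h) fun h => hp ⟨j, h⟩

section OfEq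

variable {k : Fin d}

theorem mem_unpairedFinset_self (hA : Admissible A B) (hk : B k = p) :
    (A k, A) ∈ unpairedFinset B p := by
  refine mem_unpairedFinset.2
    ⟨hk ▸ hA.lt k, hA, fun m hm => ⟨fun h => ?_, hA.ne' m k⟩⟩
  rw [hA.injective h, hk] at hm
  exact hm.false

theorem rename_swap_chiAB_of_eq (hA : Admissible A B) (hB : Injective B) (hk : B k = p) :
    rename (swap (A k) p) (chiAB A B) = -chiAB A B := by
  subst hk
  rw [rename_chiAB]
  exact chiAB_eq_neg_of_swap_at k (by simp) (by simp) fun j hj => by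
    simp [swap_apply_def, hA.injective.eq_iff, hB.eq_iff, hA.ne, hA.ne', hj]

theorem swap_comp_mem_unpairedFinset_of_eq (hB : Injective B) (hk : B k = p)
    (hx : (i, A) ∈ unpairedFinset B p) (hi : i ≠ A k) :
    (A k, swap i (A k) ∘ A) ∈ unpairedFinset B p := by
  obtain ⟨hip, hA, hu⟩ := mem_unpairedFinset.1 hx
  have hBi : ∀ j, B j ≠ i := fun j h => (hu j (h ▸ hip)).2 h
  have hkp : A k < p := hk ▸ hA.lt k
  refine mem_unpairedFinset.2 ⟨hkp, hA.perm_comp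
    (fun j => swap_apply_of_ne_of_ne (hBi j) (hA.ne' j k)) fun t => ?_,
    fun m hm => ⟨fun h => ?_, hA.ne' m k⟩⟩
  · rw [swap_apply_def]
    split_ifs with h₁ h₂
    · refine hkp.trans (lt_of_le_of_ne (not_lt.1 fun h => (hu t h).1 h₁) fun h => ?_)
      rw [← hk] at h
      exact hi (hB h ▸ h₁.symm)
    · rw [hA.injective h₂, hk]
      exact hip
    · exact hA.lt t
  · rw [Function.comp_apply, swap_apply_eq_iff, swap_apply_right] at h
    exact (hu m hm).1 h

theorem rename_swap_chiAB_add_rename_swap_chiAB_comp (hB : Injective B) (hk : B k = p)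
    (hx : (i, A) ∈ unpairedFinset B p) (hi : i ≠ A k) :
    rename (swap i p) (chiAB A B) + rename (swap (A k) p) (chiAB (swap i (A k) ∘ A) B) = 0 := by
  obtain ⟨hip, hA, hu⟩ := mem_unpairedFinset.1 hx
  have hBi : ∀ j, B j ≠ i := fun j h => (hu j (h ▸ hip)).2 h
  subst hk
  rw [rename_chiAB, rename_chiAB, add_eq_zero_iff_eq_neg']
  refine chiAB_eq_neg_of_swap_at k ?_ ?_ fun j hj => ?_
  · simp [swap_apply_def, hi, hip.ne]
  · simp [swap_apply_def, hi.symm, hA.ne]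
  · by_cases hAj : A j = i <;>
      simp [swap_apply_def, hA.injective.eq_iff, hB.eq_iff, hA.ne, hA.ne', hBi, hj, hAj]

theorem sum_unpairedFinset_rename_swap_chiAB_of_eq (hB : Injective B) (hk : B k = p) :
    ∑ x ∈ unpairedFinset B p, rename (swap x.1 p) (chiAB x.2 B) = -chiB B := by
  have hfixed : (unpairedFinset B p).filter (fun x => x.1 = x.2 k)
      = (admissibleFinset B).image fun A => (A k, A) := by
    ext ⟨i, A⟩
    simp only [mem_filter, mem_image, Prod.mk.injEq]
    constructor
    · rintro ⟨hx, rfl⟩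
      exact ⟨A, mem_admissibleFinset.2 (mem_unpairedFinset.1 hx).2.1, rfl, rfl⟩
    · rintro ⟨A, hA, rfl, rfl⟩
      exact ⟨mem_unpairedFinset_self (mem_admissibleFinset.1 hA) hk, rfl⟩
  have hcancel : ∑ x ∈ (unpairedFinset B p).filter (fun x => ¬x.1 = x.2 k),
      rename (swap x.1 p) (chiAB x.2 B) = 0 := by
    refine sum_involution (fun x _ => (x.2 k, swap x.1 (x.2 k) ∘ x.2))
      (fun ⟨i, A⟩ hx => ?_) (fun ⟨i, A⟩ hx _ h => ?_) (fun ⟨i, A⟩ hx => ?_) fun ⟨i, A⟩ hx => ?_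
    · rw [mem_filter] at hx
      exact rename_swap_chiAB_add_rename_swap_chiAB_comp hB hk hx.1 hx.2
    · exact (mem_filter.1 hx).2 (congrArg Prod.fst h).symm
    · rw [mem_filter] at hx ⊢
      exact ⟨swap_comp_mem_unpairedFinset_of_eq hB hk hx.1 hx.2, by simpa using Ne.symm hx.2⟩
    · ext t
      · simp
      · simp [swap_comm]
  rw [← sum_filter_add_sum_filter_not _ (fun x => x.1 = x.2 k), hcancel, add_zero, hfixed,
    sum_image fun _ _ _ _ h => (Prod.mk.inj h).2, chiB_eq_sum_admissible, ← sum_neg_distrib]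
  exact sum_congr rfl fun A hA => rename_swap_chiAB_of_eq (mem_admissibleFinset.1 hA) hB hk

end OfEq

end Unpaired

open Classical in
/-- Here `p` is the paper's `m` in 0-based indexing, and `#{j | B j < p}` is the 0-based
position of `p` in `B` when `p ∈ B`, and the number of entries of `B` below `p` otherwise. -/
theorem chiB_transposition_sum {n d : ℕ} (B : Fin d → Fin n) (hB : IsTopSet B)
    (p : Fin n) :
    ∑ i ∈ Finset.univ.filter (fun i : Fin n => i < p),
        MvPolynomial.rename (⇑(Equiv.swap i p)) (chiB B)
      = (if p ∈ Set.range B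
          then ((Finset.univ.filter (fun j : Fin d => B j < p)).card : ℝ) - 1
          else ((p : ℕ) : ℝ) -
            ((Finset.univ.filter (fun j : Fin d => B j < p)).card : ℝ)) • chiB B := by
  have hBinj : Injective B := hB.1.injective
  calc ∑ i ∈ univ.filter (· < p), rename (swap i p) (chiB B)
      = ∑ A ∈ admissibleFinset B, ∑ i ∈ univ.filter (· < p), rename (swap i p) (chiAB A B) := by
        simp_rw [chiB_eq_sum_admissible B, map_sum]
        exact sum_comm
    _ = #(univ.filter (B · < p)) • chiB B
          + ∑ x ∈ unpairedFinset B p, rename (swap x.1 p) (chiAB x.2 B) := by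
        rw [sum_congr rfl fun A hA =>
            sum_filter_lt_rename_swap_chiAB (mem_admissibleFinset.1 hA) hBinj p,
          sum_add_distrib, sum_unpairedFinset, chiB_eq_sum_admissible, smul_sum]
    _ = _ := by
      rw [← Nat.cast_smul_eq_nsmul ℝ]
      split_ifs with hp
      · obtain ⟨k, hk⟩ := hp
        rw [sum_unpairedFinset_rename_swap_chiAB_of_eq hBinj hk]
        module
      · rw [sum_unpairedFinset_rename_swap_chiAB_of_notMem_range hp, sum_unpairedFinset,
          chiB_eq_sum_admissible, smul_sum, smul_sum, ← sum_add_distrib]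
        refine sum_congr rfl fun A hA => ?_
        dsimp only
        rw [sum_const, ← Nat.cast_smul_eq_nsmul ℝ,
          card_sdiff_pairedFinset (mem_admissibleFinset.1 hA) hBinj p]
        module
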